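/- In the constant-marginal-cost posted-price model, for k ∈ [0,1/2] set r_k := 1 and G_k* := δ₁ (point mass at 1), and for k ∈ (1/2,1] set r_k := M + (1−M)·e^{−(2k−1)/k} and let G_k* be the probability measure with CDF G_k*(v) = 0 for v < r_k, 1 − (r_k−M)/(v−M) for r_k ≤ v < 1, and 1 at v = 1. Then: (i) k ↦ r_k is weakly decreasing on [0,1] and strictly decreasing on (1/2,1]; (ii) the support of G_k* is [r_k,1], so supports are nested increasingly in k, strictly whenever the larger weight exceeds 1/2; (iii) the atom of G_k* at v = 1 has size a_k = 1 for k ∈ [0,1/2] and a_k = (r_k−M)/(1−M) = e^{−(2k−1)/k} for k ∈ (1/2,1], which is weakly decreasing in k and strictly decreasing on (1/2,1]; (iv) if 0 ≤ k₁ < k₂ ≤ 1, then G_{k₂}*(v) ≥ G_{k₁}*(v) for all v ∈ [0,1], with strict inequality for every v ∈ (r_{k₂},1) whenever k₂ > 1/2; i.e. the lower-weight optimal prior first-order stochastically dominates the higher-weight one. -/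

import Mathlib

open MeasureTheory Set Filter

namespace PostedPrice

/-- `G` is a Borel probability measure on `[0,1]`. -/
def ProbOn01 (G : Measure ℝ) : Prop :=
  IsProbabilityMeasure G ∧ G (Set.Icc 0 1) = 1

/-- Survival function `S_G(v) = G([v,1])`. -/
noncomputable def SG (G : Measure ℝ) (v : ℝ) : ℝ := (G (Set.Icc v 1)).toReal

/-- Seller profit from posting cutoff price `r`: `Π_G(r) = Q̄·(r−M)·S_G(r)`. -/
noncomputable def PiG (Qbar M : ℝ) (G : Measure ℝ) (r : ℝ) : ℝ :=
  Qbar * (r - M) * SG G r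

/-- Consumer surplus from cutoff price `r`: `CS_G(r) = Q̄·∫_r^1 S_G(v) dv`. -/
noncomputable def CSG (Qbar : ℝ) (G : Measure ℝ) (r : ℝ) : ℝ :=
  Qbar * ∫ v in r..1, SG G v

/-- The seller-optimal posted-price cutoffs `R*(G)`. -/
def Rstar (M : ℝ) (G : Measure ℝ) : Set ℝ :=
  {r ∈ Set.Icc M 1 | ∀ r' ∈ Set.Icc M 1, (r' - M) * SG G r' ≤ (r - M) * SG G r}

/-- Weighted objective `J_k(G,r)`. -/
noncomputable def Jpp (Qbar M k : ℝ) (G : Measure ℝ) (r : ℝ) : ℝ :=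
  k * CSG Qbar G r + (1 - k) * PiG Qbar M G r

/-- Optimal value of the upstream problem, `V_k^{pp}`. -/
noncomputable def Vpp (Qbar M k : ℝ) : ℝ :=
  sSup {x | ∃ G : Measure ℝ, ProbOn01 G ∧ ∃ r ∈ Rstar M G, x = Jpp Qbar M k G r}

/-- `r_k = M + (1−M)·e^{−(2k−1)/k}`. -/
noncomputable def rkFun (M k : ℝ) : ℝ := M + (1 - M) * Real.exp (-(2*k - 1)/k)

/-- CDF of the optimal market composition `G_k` for `k ∈ (1/2,1]`. -/
noncomputable def GkCDF (M k v : ℝ) : ℝ :=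
  if v < rkFun M k then 0
  else if v < 1 then 1 - (rkFun M k - M) / (v - M)
  else 1


/-- Optimal cutoff for every welfare weight: `r_k = 1` for `k ≤ 1/2`, and
`r_k = M + (1−M)e^{−(2k−1)/k}` for `k > 1/2`. -/
noncomputable def rkAll (M k : ℝ) : ℝ := if k ≤ 1/2 then 1 else rkFun M k

/-- CDF of the optimal prior `G_k*`: the point mass at `1` for `k ≤ 1/2`, and the
shifted equal-revenue distribution with top atom for `k > 1/2`. -/
noncomputable def GstarCDF (M k v : ℝ) : ℝ :=
  if k ≤ 1/2 then (if v < 1 then 0 else 1) else GkCDF M k v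

/-!
Every optimal prior is a truncated equal-revenue law: `G_k*` has CDF
`eqRevenueCDF M (rkAll M k)`, the point mass at `1` being the case `r = 1`. Its CDF is
`1 - (r - M)/(v - M)` on `[r, 1)`, which decreases pointwise as the cutoff `r` grows, and its
atom at `1` is the jump `(r - M)/(1 - M)`. So all four claims reduce to the monotonicity of
`k ↦ r_k`, i.e. of `exp (1/k - 2)`; the support and the atom are read off the Stieltjes measure
of the CDF.
-/

open ProbabilityTheory Topology Function

section CDF

variable {μ : Measure ℝ} [IsProbabilityMeasure μ] {F : ℝ → ℝ}

theorem coe_cdf_eq (hF : ∀ v, (μ (Iic v)).toReal = F v) : ⇑(cdf μ) = F :=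
  funext fun v => (cdf_eq_real μ v).trans (hF v)

theorem measure_Ioc_eq_of_cdf (hF : ∀ v, (μ (Iic v)).toReal = F v) (a b : ℝ) :
    μ (Ioc a b) = ENNReal.ofReal (F b - F a) := by
  rw [← measure_cdf μ, StieltjesFunction.measure_Ioc, coe_cdf_eq hF]

theorem measure_Icc_eq_of_cdf (hF : ∀ v, (μ (Iic v)).toReal = F v) {a c : ℝ}
    (hc : Tendsto F (𝓝[<] a) (𝓝 c)) (b : ℝ) :
    μ (Icc a b) = ENNReal.ofReal (F b - c) := by
  rw [← measure_cdf μ, StieltjesFunction.measure_Icc, coe_cdf_eq hF, leftLim_eq_of_tendsto hc]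

theorem measure_ne_zero_iff_of_strictMonoOn (hF : ∀ v, (μ (Iic v)).toReal = F v) {r t : ℝ}
    (hfull : μ (Icc r t) = 1) (hatom : μ {t} ≠ 0) (hmono : StrictMonoOn F (Ico r t))
    {s : Set ℝ} (hs : IsOpen s) : μ s ≠ 0 ↔ (s ∩ Icc r t).Nonempty := by
  constructor
  · intro hne
    by_contra hdisj
    have hnull : μ (Icc r t)ᶜ = 0 := prob_compl_eq_zero_iff measurableSet_Icc |>.mpr hfull
    exact hne (measure_mono_null (fun x hx hxI => hdisj ⟨x, hx, hxI⟩) hnull)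
  · rintro ⟨x, hxs, hxr, hxt⟩
    rcases hxt.eq_or_lt with rfl | hxt
    · exact fun h => hatom (measure_mono_null (singleton_subset_iff.mpr hxs) h)
    obtain ⟨u, ⟨hxu, hut⟩, hus⟩ := exists_Ico_subset_of_mem_nhds' (hs.mem_nhds hxs) hxt
    set b := (x + u) / 2
    have hxb : x < b := by simp only [b]; linarith
    have hbu : b < u := by simp only [b]; linarith
    have hpos : 0 < μ (Ioc x b) := by
      rw [measure_Ioc_eq_of_cdf hF, ENNReal.ofReal_pos, sub_pos]
      exact hmono ⟨hxr, hxt⟩ ⟨hxr.trans hxb.le, hbu.trans_le hut⟩ hxb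
    exact (hpos.trans_le (measure_mono fun y hy => hus ⟨hy.1.le, hy.2.trans_lt hbu⟩)).ne'

end CDF

noncomputable def eqRevenueCDF (M r v : ℝ) : ℝ :=
  if v < r then 0 else if v < 1 then 1 - (r - M) / (v - M) else 1

section EqRevenue

variable {M r : ℝ}

theorem eqRevenueCDF_of_lt {v : ℝ} (hv : v < r) : eqRevenueCDF M r v = 0 := if_pos hv

theorem eqRevenueCDF_of_mem_Ico {v : ℝ} (hv : v ∈ Ico r 1) :
    eqRevenueCDF M r v = 1 - (r - M) / (v - M) := by
  rw [eqRevenueCDF, if_neg hv.1.not_gt, if_pos hv.2]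

theorem eqRevenueCDF_of_one_le {v : ℝ} (hr : r ≤ v) (hv : 1 ≤ v) :
    eqRevenueCDF M r v = 1 := by
  rw [eqRevenueCDF, if_neg hr.not_gt, if_neg hv.not_gt]

theorem eqRevenueCDF_pos (hM : M < r) {v : ℝ} (hv : r < v) : 0 < eqRevenueCDF M r v := by
  rcases lt_or_ge v 1 with hv1 | hv1
  · rw [eqRevenueCDF_of_mem_Ico ⟨hv.le, hv1⟩, sub_pos, div_lt_one (by linarith)]
    linarith
  · rw [eqRevenueCDF_of_one_le hv.le hv1]
    exact one_pos

theorem eqRevenueCDF_nonneg (hM : M < r) (v : ℝ) : 0 ≤ eqRevenueCDF M r v := by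
  rcases lt_trichotomy v r with hv | rfl | hv
  · exact (eqRevenueCDF_of_lt hv).ge
  · unfold eqRevenueCDF
    split_ifs
    · rfl
    · rw [div_self (sub_pos.mpr hM).ne', sub_self]
    · exact zero_le_one
  · exact (eqRevenueCDF_pos hM hv).le

theorem strictMonoOn_eqRevenueCDF (hM : M < r) : StrictMonoOn (eqRevenueCDF M r) (Ico r 1) := by
  intro x hx y hy hxy
  rw [eqRevenueCDF_of_mem_Ico hx, eqRevenueCDF_of_mem_Ico hy]
  have : (r - M) / (y - M) < (r - M) / (x - M) :=
    div_lt_div_of_pos_left (by linarith) (by linarith [hx.1]) (by linarith)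
  linarith

theorem eqRevenueCDF_le_of_le {r' : ℝ} (hM : M < r) (hr : r ≤ r') (v : ℝ) :
    eqRevenueCDF M r' v ≤ eqRevenueCDF M r v := by
  rcases lt_or_ge v r' with hv | hv
  · rw [eqRevenueCDF_of_lt hv]
    exact eqRevenueCDF_nonneg hM v
  rcases lt_or_ge v 1 with hv1 | hv1
  · rw [eqRevenueCDF_of_mem_Ico ⟨hv, hv1⟩, eqRevenueCDF_of_mem_Ico ⟨hr.trans hv, hv1⟩]
    have : (r - M) / (v - M) ≤ (r' - M) / (v - M) :=
      div_le_div_of_nonneg_right (by linarith) (by linarith)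
    linarith
  · rw [eqRevenueCDF_of_one_le (hr.trans hv) hv1, eqRevenueCDF_of_one_le hv hv1]

theorem eqRevenueCDF_lt_of_lt {r' v : ℝ} (hM : M < r) (hr : r < r') (hv : v ∈ Ioo r 1) :
    eqRevenueCDF M r' v < eqRevenueCDF M r v := by
  rcases lt_or_ge v r' with hvr | hvr
  · rw [eqRevenueCDF_of_lt hvr]
    exact eqRevenueCDF_pos hM hv.1
  · rw [eqRevenueCDF_of_mem_Ico ⟨hvr, hv.2⟩, eqRevenueCDF_of_mem_Ico ⟨hv.1.le, hv.2⟩]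
    have : (r - M) / (v - M) < (r' - M) / (v - M) :=
      div_lt_div_of_pos_right (by linarith) (by linarith [hv.1])
    linarith

theorem tendsto_eqRevenueCDF_nhdsLT_one (hM : M < r) (hr : r ≤ 1) :
    Tendsto (eqRevenueCDF M r) (𝓝[<] 1) (𝓝 (1 - (r - M) / (1 - M))) := by
  rcases hr.eq_or_lt with rfl | hr
  · rw [div_self (sub_pos.mpr hM).ne', sub_self]
    exact tendsto_const_nhds.congr' <| eventually_nhdsWithin_of_forall
      fun v hv => (eqRevenueCDF_of_lt hv).symm
  · have hcont : ContinuousAt (fun v => 1 - (r - M) / (v - M)) 1 :=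
      continuousAt_const.sub (continuousAt_const.div (by fun_prop) (by linarith))
    refine (hcont.tendsto.mono_left nhdsWithin_le_nhds).congr' ?_
    filter_upwards [Ioo_mem_nhdsLT hr] with v hv
    exact (eqRevenueCDF_of_mem_Ico ⟨hv.1.le, hv.2⟩).symm

end EqRevenue

section EqRevenueLaw

variable {μ : Measure ℝ} [IsProbabilityMeasure μ] {M r : ℝ}

theorem toReal_measure_singleton_one_of_eqRevenueCDF
    (hF : ∀ v, (μ (Iic v)).toReal = eqRevenueCDF M r v) (hM : M < r) (hr : r ≤ 1) :
    (μ {1}).toReal = (r - M) / (1 - M) := by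
  rw [← Icc_self, measure_Icc_eq_of_cdf hF (tendsto_eqRevenueCDF_nhdsLT_one hM hr),
    eqRevenueCDF_of_one_le hr le_rfl, sub_sub_cancel]
  exact ENNReal.toReal_ofReal (div_nonneg (by linarith) (by linarith))

theorem measure_ne_zero_iff_of_eqRevenueCDF
    (hF : ∀ v, (μ (Iic v)).toReal = eqRevenueCDF M r v) (hM : M < r) (hr : r ≤ 1)
    {s : Set ℝ} (hs : IsOpen s) : μ s ≠ 0 ↔ (s ∩ Icc r 1).Nonempty := by
  refine measure_ne_zero_iff_of_strictMonoOn hF ?_ ?_ (strictMonoOn_eqRevenueCDF hM) hs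
  · have hleft : Tendsto (eqRevenueCDF M r) (𝓝[<] r) (𝓝 0) :=
      tendsto_const_nhds.congr' <| eventually_nhdsWithin_of_forall
        fun v hv => (eqRevenueCDF_of_lt hv).symm
    rw [measure_Icc_eq_of_cdf hF hleft, eqRevenueCDF_of_one_le hr le_rfl, sub_zero,
      ENNReal.ofReal_one]
  · intro h
    have := toReal_measure_singleton_one_of_eqRevenueCDF hF hM hr
    rw [h, ENNReal.toReal_zero, eq_comm, div_eq_zero_iff] at this
    rcases this with h | h <;> linarith

end EqRevenueLaw

section Cutoff

variable {M : ℝ}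

theorem strictAntiOn_exp_neg_two_sub_div :
    StrictAntiOn (fun k : ℝ => Real.exp (-(2*k - 1)/k)) (Ioi 0) := by
  intro a ha b hb hab
  simp only [Real.exp_lt_exp]
  rw [div_lt_div_iff₀ hb ha]
  nlinarith

theorem rkFun_sub_div (hM : M ≠ 1) (k : ℝ) :
    (rkFun M k - M) / (1 - M) = Real.exp (-(2*k - 1)/k) := by
  rw [rkFun, add_sub_cancel_left, mul_div_cancel_left₀ _ (sub_ne_zero.mpr hM.symm)]

theorem lt_rkFun (hM : M < 1) (k : ℝ) : M < rkFun M k := by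
  have := mul_pos (sub_pos.mpr hM) (Real.exp_pos (-(2*k - 1)/k))
  rw [rkFun]
  linarith

theorem rkFun_lt_one (hM : M < 1) {k : ℝ} (hk : 1/2 < k) : rkFun M k < 1 := by
  have hexp : Real.exp (-(2*k - 1)/k) < 1 :=
    Real.exp_lt_one_iff.mpr (div_neg_of_neg_of_pos (by linarith) (by linarith))
  have := mul_lt_mul_of_pos_left hexp (sub_pos.mpr hM)
  rw [rkFun]
  linarith

theorem strictAntiOn_rkFun (hM : M < 1) : StrictAntiOn (rkFun M) (Ioi 0) := by
  intro a ha b hb hab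
  have := mul_lt_mul_of_pos_left (strictAntiOn_exp_neg_two_sub_div ha hb hab) (sub_pos.mpr hM)
  simp only [rkFun]
  linarith

theorem lt_rkAll (hM : M < 1) (k : ℝ) : M < rkAll M k := by
  unfold rkAll
  split_ifs
  exacts [hM, lt_rkFun hM k]

theorem rkAll_le_one (hM : M < 1) (k : ℝ) : rkAll M k ≤ 1 := by
  unfold rkAll
  split_ifs with hk
  exacts [le_rfl, (rkFun_lt_one hM (not_le.mp hk)).le]

theorem rkAll_lt_rkAll (hM : M < 1) {k₁ k₂ : ℝ} (h : k₁ < k₂) (h₂ : 1/2 < k₂) :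
    rkAll M k₂ < rkAll M k₁ := by
  rw [rkAll, if_neg h₂.not_ge, rkAll]
  split_ifs with h₁
  · exact rkFun_lt_one hM h₂
  · have h₁ : 0 < k₁ := by linarith [not_le.mp h₁]
    exact strictAntiOn_rkFun hM h₁ (h₁.trans h) h

theorem antitone_rkAll (hM : M < 1) : Antitone (rkAll M) := by
  intro k₁ k₂ h
  rcases le_or_gt k₂ (1/2) with h₂ | h₂
  · rw [rkAll, if_pos h₂, rkAll, if_pos (h.trans h₂)]
  · rcases h.eq_or_lt with rfl | h
    exacts [le_rfl, (rkAll_lt_rkAll hM h h₂).le]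

theorem rkAll_sub_div (hM : M ≠ 1) (k : ℝ) :
    (rkAll M k - M) / (1 - M) = if k ≤ 1/2 then 1 else (rkFun M k - M) / (1 - M) := by
  unfold rkAll
  split_ifs
  exacts [div_self (sub_ne_zero.mpr hM.symm), rfl]

theorem GstarCDF_eq_eqRevenueCDF (M k : ℝ) : GstarCDF M k = eqRevenueCDF M (rkAll M k) := by
  funext v
  unfold GstarCDF rkAll
  split_ifs <;> simp_all [eqRevenueCDF, GkCDF]

end Cutoff

theorem posted_price_comparative_statics_general
    (M : ℝ) (hM : M ∈ Set.Ico (0:ℝ) 1)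
    (μ : ℝ → Measure ℝ)
    (hμ : ∀ k ∈ Set.Icc (0:ℝ) 1, ProbOn01 (μ k) ∧
      ∀ v : ℝ, ((μ k) (Set.Iic v)).toReal = GstarCDF M k v) :
    -- (i)
    (AntitoneOn (rkAll M) (Set.Icc 0 1) ∧ StrictAntiOn (rkAll M) (Set.Ioc (1/2) 1)) ∧
    -- (ii)
    ((∀ k ∈ Set.Icc (0:ℝ) 1, ∀ s : Set ℝ, IsOpen s →
        ((μ k) s ≠ 0 ↔ (s ∩ Set.Icc (rkAll M k) 1).Nonempty)) ∧
     (∀ k₁ ∈ Set.Icc (0:ℝ) 1, ∀ k₂ ∈ Set.Icc (0:ℝ) 1, k₁ < k₂ →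
        Set.Icc (rkAll M k₁) 1 ⊆ Set.Icc (rkAll M k₂) 1 ∧
        (1/2 < k₂ → Set.Icc (rkAll M k₁) 1 ⊂ Set.Icc (rkAll M k₂) 1))) ∧
    -- (iii)
    ((∀ k ∈ Set.Icc (0:ℝ) 1,
        ((μ k) {1}).toReal = (if k ≤ 1/2 then 1 else (rkFun M k - M)/(1 - M)) ∧
        (1/2 < k → (rkFun M k - M)/(1 - M) = Real.exp (-(2*k - 1)/k))) ∧
     AntitoneOn (fun k => ((μ k) {1}).toReal) (Set.Icc 0 1) ∧
     StrictAntiOn (fun k => ((μ k) {1}).toReal) (Set.Ioc (1/2) 1)) ∧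
    -- (iv)
    (∀ k₁ k₂ : ℝ, 0 ≤ k₁ → k₁ < k₂ → k₂ ≤ 1 →
      (∀ v ∈ Set.Icc (0:ℝ) 1, ((μ k₁) (Set.Iic v)).toReal ≤ ((μ k₂) (Set.Iic v)).toReal) ∧
      (1/2 < k₂ → ∀ v ∈ Set.Ioo (rkAll M k₂) 1,
        ((μ k₁) (Set.Iic v)).toReal < ((μ k₂) (Set.Iic v)).toReal)) := by
  obtain ⟨-, hM1⟩ := hM
  have hcdf (k : ℝ) (hk : k ∈ Icc (0:ℝ) 1) (v : ℝ) :
      ((μ k) (Iic v)).toReal = eqRevenueCDF M (rkAll M k) v := by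
    rw [(hμ k hk).2, GstarCDF_eq_eqRevenueCDF]
  have hatom (k : ℝ) (hk : k ∈ Icc (0:ℝ) 1) :
      ((μ k) {1}).toReal = (rkAll M k - M) / (1 - M) :=
    have := (hμ k hk).1.1
    toReal_measure_singleton_one_of_eqRevenueCDF (hcdf k hk) (lt_rkAll hM1 k)
      (rkAll_le_one hM1 k)
  have hIcc {k : ℝ} (hk : k ∈ Ioc (1/2 : ℝ) 1) : k ∈ Icc (0:ℝ) 1 := ⟨by linarith [hk.1], hk.2⟩
  refine ⟨⟨(antitone_rkAll hM1).antitoneOn _, fun a _ b hb hab => rkAll_lt_rkAll hM1 hab hb.1⟩,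
    ⟨fun k hk s hs => ?_, fun k₁ _ k₂ _ h => ⟨Icc_subset_Icc_left (antitone_rkAll hM1 h.le),
      fun h₂ => Icc_ssubset_Icc_left (rkAll_le_one hM1 k₂) (rkAll_lt_rkAll hM1 h h₂) le_rfl⟩⟩,
    ⟨fun k hk => ⟨(hatom k hk).trans (rkAll_sub_div hM1.ne k),
      fun _ => rkFun_sub_div hM1.ne k⟩, fun a ha b hb hab => ?_, fun a ha b hb hab => ?_⟩,
    fun k₁ k₂ h₀ h h₂ => ⟨fun v _ => ?_, fun h₂' v hv => ?_⟩⟩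
  · have := (hμ k hk).1.1
    exact measure_ne_zero_iff_of_eqRevenueCDF (hcdf k hk) (lt_rkAll hM1 k)
      (rkAll_le_one hM1 k) hs
  · simp only [hatom a ha, hatom b hb]
    exact div_le_div_of_nonneg_right (by linarith [antitone_rkAll hM1 hab]) (by linarith)
  · simp only [hatom a (hIcc ha), hatom b (hIcc hb)]
    exact div_lt_div_of_pos_right (by linarith [rkAll_lt_rkAll hM1 hab hb.1]) (by linarith)
  · rw [hcdf k₁ ⟨h₀, by linarith⟩, hcdf k₂ ⟨by linarith, h₂⟩]
    exact eqRevenueCDF_le_of_le (lt_rkAll hM1 k₂) (antitone_rkAll hM1 h.le) v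
  · rw [hcdf k₁ ⟨h₀, by linarith⟩, hcdf k₂ ⟨by linarith, h₂⟩]
    exact eqRevenueCDF_lt_of_lt (lt_rkAll hM1 k₂) (rkAll_lt_rkAll hM1 h h₂') hv

/-- comparative statics of the optimal prior in the posted-price model:
(i) `k ↦ r_k` is weakly decreasing on `[0,1]`, strictly on `(1/2,1]`;
(ii) the support of `G_k*` is `[r_k,1]`, so supports are nested increasingly in `k`,
strictly whenever the larger weight exceeds `1/2`;
(iii) the atom of `G_k*` at `1` is `1` for `k ≤ 1/2` and `(r_k−M)/(1−M) = e^{−(2k−1)/k}`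
for `k > 1/2`, weakly decreasing in `k` and strictly decreasing on `(1/2,1]`;
(iv) lower-weight optimal priors first-order stochastically dominate higher-weight
ones, strictly on `(r_{k₂},1)` when `k₂ > 1/2`. -/
theorem posted_price_comparative_statics
    (Qbar M : ℝ) (hQbar : 0 < Qbar) (hM : M ∈ Set.Ico (0:ℝ) 1)
    (μ : ℝ → Measure ℝ)
    (hμ : ∀ k ∈ Set.Icc (0:ℝ) 1, ProbOn01 (μ k) ∧
      ∀ v : ℝ, ((μ k) (Set.Iic v)).toReal = GstarCDF M k v) :
    -- (i)
    (AntitoneOn (rkAll M) (Set.Icc 0 1) ∧ StrictAntiOn (rkAll M) (Set.Ioc (1/2) 1)) ∧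
    -- (ii)
    ((∀ k ∈ Set.Icc (0:ℝ) 1, ∀ s : Set ℝ, IsOpen s →
        ((μ k) s ≠ 0 ↔ (s ∩ Set.Icc (rkAll M k) 1).Nonempty)) ∧
     (∀ k₁ ∈ Set.Icc (0:ℝ) 1, ∀ k₂ ∈ Set.Icc (0:ℝ) 1, k₁ < k₂ →
        Set.Icc (rkAll M k₁) 1 ⊆ Set.Icc (rkAll M k₂) 1 ∧
        (1/2 < k₂ → Set.Icc (rkAll M k₁) 1 ⊂ Set.Icc (rkAll M k₂) 1))) ∧
    -- (iii)
    ((∀ k ∈ Set.Icc (0:ℝ) 1,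
        ((μ k) {1}).toReal = (if k ≤ 1/2 then 1 else (rkFun M k - M)/(1 - M)) ∧
        (1/2 < k → (rkFun M k - M)/(1 - M) = Real.exp (-(2*k - 1)/k))) ∧
     AntitoneOn (fun k => ((μ k) {1}).toReal) (Set.Icc 0 1) ∧
     StrictAntiOn (fun k => ((μ k) {1}).toReal) (Set.Ioc (1/2) 1)) ∧
    -- (iv)
    (∀ k₁ k₂ : ℝ, 0 ≤ k₁ → k₁ < k₂ → k₂ ≤ 1 →
      (∀ v ∈ Set.Icc (0:ℝ) 1, ((μ k₁) (Set.Iic v)).toReal ≤ ((μ k₂) (Set.Iic v)).toReal) ∧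
      (1/2 < k₂ → ∀ v ∈ Set.Ioo (rkAll M k₂) 1,
        ((μ k₁) (Set.Iic v)).toReal < ((μ k₂) (Set.Iic v)).toReal)) :=
  posted_price_comparative_statics_general M hM μ hμ

end PostedPrice
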